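/- For every pair of reactive Turing machines M1 and M2 and every set of communication channels C′ ⊆ C, there exists a reactive Turing machine M such that T(M) is divergence-preserving branching bisimilar to T([M1 ∥ M2]_{C′}). -/

import Mathlib

namespace RTMPaper

/-! ## Labelled transition systems

An `A`-labelled transition system; transition labels are drawn from `Option A`,
where `none` plays the role of the unobservable action τ. -/

structure LTS (A : Type) where
  State : Type
  tr : State → Option A → State → Prop
  init : State
  final : Set State

namespace LTS

variable {A : Type}

/-- A τ-step. -/
def tauStep (T : LTS A) (s t : T.State) : Prop := T.tr s none t

/-- `⇒` : the reflexive–transitive closure of τ-steps. -/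
def tauReach (T : LTS A) : T.State → T.State → Prop :=
  Relation.ReflTransGen T.tauStep

/-- `s —(a)→ t` : either `s —a→ t`, or `a = τ` and `s = t`. -/
def optStep (T : LTS A) (s : T.State) (a : Option A) (t : T.State) : Prop :=
  T.tr s a t ∨ (a = none ∧ s = t)

/-- The set of outgoing transitions of a state. -/
def out (T : LTS A) (s : T.State) : Set (Option A × T.State) :=
  {p | T.tr s p.1 p.2}

def FinitelyBranching (T : LTS A) : Prop := ∀ s, (T.out s).Finite

/-- The branching degree of `T` is bounded by `B`. -/
def BranchingDegreeBoundedBy (T : LTS A) (B : ℕ) : Prop :=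
  ∀ s, (T.out s).Finite ∧ (T.out s).ncard ≤ B

def BoundedlyBranching (T : LTS A) : Prop := ∃ B, T.BranchingDegreeBoundedBy B

/-- A deterministic transition system. -/
def Deterministic (T : LTS A) : Prop :=
  (∀ s a t₁ t₂, T.tr s a t₁ → T.tr s a t₂ → t₁ = t₂) ∧
  (∀ s t, T.tr s none t → ∀ a u, T.tr s a u → a = none)

/-- Relabelling of an LTS along a map of action alphabets (τ is mapped to τ). -/
def relabel {A' : Type} (f : A → A') (T : LTS A) : LTS A' where
  State := T.State
  tr s a t := ∃ a₀ : Option A, T.tr s a₀ t ∧ a = Option.map f a₀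
  init := T.init
  final := T.final

end LTS

/-! ## (Divergence-preserving) branching bisimilarity -/

structure IsBranchingBisimulation {A : Type} (T₁ T₂ : LTS A)
    (R : T₁.State → T₂.State → Prop) : Prop where
  fwd : ∀ s₁ s₂ a s₁', R s₁ s₂ → T₁.tr s₁ a s₁' →
    ∃ s₂'' s₂', T₂.tauReach s₂ s₂'' ∧ T₂.optStep s₂'' a s₂' ∧ R s₁ s₂'' ∧ R s₁' s₂'
  bwd : ∀ s₁ s₂ a s₂', R s₁ s₂ → T₂.tr s₂ a s₂' →
    ∃ s₁'' s₁', T₁.tauReach s₁ s₁'' ∧ T₁.optStep s₁'' a s₁' ∧ R s₁'' s₂ ∧ R s₁' s₂'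
  finFwd : ∀ s₁ s₂, R s₁ s₂ → s₁ ∈ T₁.final →
    ∃ s₂', T₂.tauReach s₂ s₂' ∧ R s₁ s₂' ∧ s₂' ∈ T₂.final
  finBwd : ∀ s₁ s₂, R s₁ s₂ → s₂ ∈ T₂.final →
    ∃ s₁', T₁.tauReach s₁ s₁' ∧ R s₁' s₂ ∧ s₁' ∈ T₁.final

/-- The divergence-preservation conditions on a branching bisimulation. -/
def DivergencePreserving {A : Type} (T₁ T₂ : LTS A)
    (R : T₁.State → T₂.State → Prop) : Prop :=
  (∀ (s₂ : T₂.State) (f : ℕ → T₁.State),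
      (∀ i, T₁.tauStep (f i) (f (i + 1))) → (∀ i, R (f i) s₂) →
      ∃ s₂', Relation.TransGen T₂.tauStep s₂ s₂' ∧ ∃ i, R (f i) s₂') ∧
  (∀ (s₁ : T₁.State) (f : ℕ → T₂.State),
      (∀ i, T₂.tauStep (f i) (f (i + 1))) → (∀ i, R s₁ (f i)) →
      ∃ s₁', Relation.TransGen T₁.tauStep s₁ s₁' ∧ ∃ i, R s₁' (f i))

/-- `T₁ ≈b T₂` : branching bisimilarity. -/
def BranchingBisimilar {A : Type} (T₁ T₂ : LTS A) : Prop :=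
  ∃ R, IsBranchingBisimulation T₁ T₂ R ∧ R T₁.init T₂.init

/-- `T₁ ≈Δb T₂` : divergence-preserving branching bisimilarity. -/
def DPBranchingBisimilar {A : Type} (T₁ T₂ : LTS A) : Prop :=
  ∃ R, IsBranchingBisimulation T₁ T₂ R ∧ DivergencePreserving T₁ T₂ R ∧
    R T₁.init T₂.init

/-! ## Effective and computable transition systems -/

/-- A set of natural numbers is recursively enumerable. -/
def REset (X : Set ℕ) : Prop :=
  ∃ f : ℕ →. Unit, Partrec f ∧ ∀ n, (f n).Dom ↔ n ∈ X

/-- A (finitely branching) LTS is computable if, with respect to some injective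
codings of its labels and states into ℕ, the functions `out` and `fin` are
recursive. -/
def LTS.IsComputable {A : Type} (T : LTS A) : Prop :=
  ∃ hfb : ∀ s, (T.out s).Finite,
    ∃ (cL : Option A → ℕ) (cS : T.State → ℕ),
      Function.Injective cL ∧ Function.Injective cS ∧
      (∃ fo : ℕ → ℕ, Computable fo ∧ ∀ s,
        fo (cS s) =
          Encodable.encode
            (((hfb s).toFinset).image fun p => Nat.pair (cL p.1) (cS p.2))) ∧
      (∃ ff : ℕ → ℕ, Computable ff ∧ ∀ s,
        (s ∈ T.final → ff (cS s) = 1) ∧ (s ∉ T.final → ff (cS s) = 0))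

/-- A (finitely branching) LTS is effective if, with respect to some injective
codings of its labels and states into ℕ, its transition relation and its set of
final states are recursively enumerable. -/
def LTS.IsEffective {A : Type} (T : LTS A) : Prop :=
  T.FinitelyBranching ∧
  ∃ (cL : Option A → ℕ) (cS : T.State → ℕ),
    Function.Injective cL ∧ Function.Injective cS ∧
    REset {n | ∃ s a t, T.tr s a t ∧ n = Nat.pair (cS s) (Nat.pair (cL a) (cS t))} ∧
    REset {n | ∃ s ∈ T.final, n = cS s}

/-! ## Reactive Turing machines -/

inductive Move : Type
  | L | R
deriving DecidableEq

instance : Fintype Move := ⟨{Move.L, Move.R}, fun x => by cases x <;> simp⟩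

/-- A tape instance: the content left of the head (nearest symbol first), the
symbol under the head, and the content right of the head (nearest symbol
first).  Tape symbols are `Option D`, with `none` the blank symbol □. -/
structure Tape (D : Type) where
  left : List (Option D)
  head : Option D
  right : List (Option D)

def Tape.empty (D : Type) : Tape D := ⟨[], none, []⟩

/-- Write `e` at the head position and move the head in direction `m`. -/
def Tape.writeMove {D : Type} (t : Tape D) (e : Option D) : Move → Tape D
  | .L =>
    match t.left with
    | [] => ⟨[], none, e :: t.right⟩
    | x :: l => ⟨l, x, e :: t.right⟩
  | .R =>
    match t.right with
    | [] => ⟨e :: t.left, none, []⟩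
    | x :: r => ⟨e :: t.left, x, r⟩

/-- A reactive Turing machine with action symbols `A` (labels `Option A`,
`none` being τ) and data symbols `D` (tape symbols `Option D`, `none` being
the blank symbol). -/
structure RTM (A D : Type) where
  Q : Type
  [instQ : Fintype Q]
  trans : Q → Option D → Option A → Option D → Move → Q → Prop
  init : Q
  final : Set Q

attribute [instance] RTM.instQ

/-- The transition system `T(M)` associated with an RTM `M`. -/
def RTM.lts {A D : Type} (M : RTM A D) : LTS A where
  State := M.Q × Tape D
  tr c a c' := ∃ e m, M.trans c.1 c.2.head a e m c'.1 ∧ c'.2 = c.2.writeMove e m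
  init := (M.init, Tape.empty D)
  final := {c | c.1 ∈ M.final}

def RTM.Deterministic {A D : Type} (M : RTM A D) : Prop :=
  (∀ s d a e₁ m₁ t₁ e₂ m₂ t₂, M.trans s d a e₁ m₁ t₁ → M.trans s d a e₂ m₂ t₂ →
      e₁ = e₂ ∧ m₁ = m₂ ∧ t₁ = t₂) ∧
  (∀ s d e₁ m₁ t₁, M.trans s d none e₁ m₁ t₁ →
      ∀ a e₂ m₂ t₂, M.trans s d a e₂ m₂ t₂ → a = none)

/-! ## Actions over channels, and parallel composition -/

/-- Actions over a set `C` of channels with communicated values in `V`,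
together with further (base) actions from `B`:  `recv c v` is `c?v`,
`send c v` is `c!v`. -/
inductive CAct (C V B : Type) : Type
  | recv : C → V → CAct C V B
  | send : C → V → CAct C V B
  | base : B → CAct C V B
deriving DecidableEq

/-- The (possibly silent) action `a` is a communication action on one of the
channels in `C'`. -/
def IsComm {C V B : Type} (C' : Set C) : Option (CAct C V B) → Prop
  | some (.recv c _) => c ∈ C'
  | some (.send c _) => c ∈ C'
  | _ => False

/-- Parallel composition `[T₁ ∥ T₂]_{C'}` of transition systems, enforcing
communication on the channels in `C'`. -/
def parLTS {C V B : Type} (C' : Set C) (T₁ T₂ : LTS (CAct C V B)) :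
    LTS (CAct C V B) where
  State := T₁.State × T₂.State
  init := (T₁.init, T₂.init)
  final := {p | p.1 ∈ T₁.final ∧ p.2 ∈ T₂.final}
  tr p a p' :=
    ¬ IsComm C' a ∧
    ((T₁.tr p.1 a p'.1 ∧ p.2 = p'.2) ∨
     (T₂.tr p.2 a p'.2 ∧ p.1 = p'.1) ∨
     (a = none ∧ ∃ c ∈ C', ∃ d : V,
        (T₁.tr p.1 (some (.send c d)) p'.1 ∧ T₂.tr p.2 (some (.recv c d)) p'.2) ∨
        (T₁.tr p.1 (some (.recv c d)) p'.1 ∧ T₂.tr p.2 (some (.send c d)) p'.2)))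

/-- The behaviour of `sender(M)`: output the symbols of `w` one by one along
channel `cu`, then halt in a final state. -/
def outputLTS {C V B : Type} (cu : C) (w : List V) : LTS (CAct C V B) where
  State := List V
  tr s a t := ∃ d, s = d :: t ∧ a = some (.send cu d)
  init := w
  final := {([] : List V)}

/-- A concrete (syntactic, Gödel-numberable) presentation of a reactive Turing
machine: states are `Fin (n+1)`, and the transition relation is a finite set of
tuples. -/
structure RTMc (A D : Type) where
  n : ℕ
  trans : Finset (Fin (n + 1) × Option D × Option A × Option D × Move × Fin (n + 1))
  init : Fin (n + 1)
  final : Finset (Fin (n + 1))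

def RTMc.toRTM {A D : Type} (M : RTMc A D) : RTM A D where
  Q := Fin (M.n + 1)
  trans s d a e m t := (s, d, a, e, m, t) ∈ M.trans
  init := M.init
  final := (↑M.final : Set (Fin (M.n + 1)))

end RTMPaper

/-! The simulating machine keeps the two tapes on two tracks of its own tape, each track
carrying a bit that marks the position of that tape's head. Its control holds the control
states of `M₁` and `M₂`, the symbol under the head of `M₂`, and for each marker the direction
in which it lies. Between actions it walks to the first marker; there it performs a step of
`M₁` directly, a step of `M₂` from the remembered symbol (the write on the second track is then
carried out on an excursion to the second marker), or a communication between the two. Every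
bookkeeping step is silent and is related to the state of the composition it is realising;
these steps decrease a well-founded measure (phase, distance to the sought marker), which makes
the relation divergence-preserving. -/

namespace RTMPaper

theorem dpBranchingBisimilar_of_simulation {A : Type} {α : Type*} [Preorder α]
    [WellFoundedLT α] {T₁ T₂ : LTS A} (R : T₁.State → T₂.State → Prop) (μ : T₁.State → α)
    (hinit : R T₁.init T₂.init)
    (hstep : ∀ u s a u', R u s → T₁.tr u a u' →
      (a = none ∧ R u' s ∧ μ u' < μ u) ∨ ∃ s', T₂.tr s a s' ∧ R u' s')
    (hsim : ∀ u s a s', R u s → T₂.tr s a s' →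
      ∃ w u', T₁.tauReach u w ∧ R w s ∧ T₁.tr w a u' ∧ R u' s')
    (hfin : ∀ u s, R u s → u ∈ T₁.final → s ∈ T₂.final)
    (hfin' : ∀ u s, R u s → s ∈ T₂.final → ∃ w, T₁.tauReach u w ∧ R w s ∧ w ∈ T₁.final) :
    DPBranchingBisimilar T₁ T₂ := by
  refine ⟨R, ⟨?_, ?_, ?_, hfin'⟩, ⟨?_, ?_⟩, hinit⟩
  · intro u s a u' hR h
    rcases hstep u s a u' hR h with ⟨rfl, hR', -⟩ | ⟨s', hs, hR'⟩
    · exact ⟨s, s, .refl, Or.inr ⟨rfl, rfl⟩, hR, hR'⟩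
    · exact ⟨s, s', .refl, Or.inl hs, hR, hR'⟩
  · intro u s a s' hR h
    obtain ⟨w, u', hw, hRw, hu', hR'⟩ := hsim u s a s' hR h
    exact ⟨w, u', hw, Or.inl hu', hRw, hR'⟩
  · exact fun u s hR hu => ⟨s, .refl, hR, hfin u s hR hu⟩
  · intro s f hf hR
    obtain ⟨n, hn⟩ := WellFounded.not_rel_apply_succ (r := (· < ·)) (μ ∘ f)
    rcases hstep _ _ _ _ (hR n) (hf n) with ⟨-, -, hlt⟩ | ⟨s', hs, hR'⟩
    · exact absurd hlt hn
    · exact ⟨s', .single hs, n + 1, hR'⟩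
  · intro u f hf hR
    obtain ⟨w, u', hw, -, hu', hR'⟩ := hsim u (f 0) none (f 1) (hR 0) (hf 0)
    exact ⟨u', .tail' hw hu', 1, hR'⟩

namespace Move

def shift : Move → ℤ
  | .L => -1
  | .R => 1

def opp : Move → Move
  | .L => .R
  | .R => .L

def PointsTo (d : Move) (π : ℤ) : Prop := π ≠ 0 → (d = .R ↔ 0 < π)

/-- The direction towards a marker after moving by `m`, if `d` pointed to it before and
`onTarget` tells whether the marker was on the cell just left. -/
def redirect (onTarget : Bool) (d m : Move) : Move := if onTarget then m.opp else d

lemma pointsTo_opp (m : Move) : m.opp.PointsTo (-m.shift) := by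
  cases m <;> simp [PointsTo, opp, shift]

lemma PointsTo.redirect {d : Move} {π : ℤ} {b : Bool} (h : d.PointsTo π)
    (hb : b = true ↔ π = 0) (m : Move) : (d.redirect b m).PointsTo (π - m.shift) := by
  cases b <;> cases d <;> cases m <;> simp_all [PointsTo, Move.redirect, opp, shift] <;> omega

lemma PointsTo.natAbs_sub_shift_lt {d : Move} {π : ℤ} (h : d.PointsTo π) (hπ : π ≠ 0) :
    (π - d.shift).natAbs < π.natAbs := by
  have := h hπ
  cases d <;> simp [shift] at this ⊢ <;> omega

end Move

def writeShift {α : Type*} (w : ℤ → α) (x : α) (s : ℤ) : ℤ → α :=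
  fun z => Function.update w 0 x (z + s)

lemma writeShift_of_eq {α : Type*} {w : ℤ → α} {x : α} (hx : x = w 0) (s : ℤ) :
    writeShift w x s = fun z => w (z + s) := by
  subst hx
  unfold writeShift
  rw [Function.update_eq_self]

lemma comp_writeShift {α β : Type*} (f : α → β) (w : ℤ → α) (x : α) (s : ℤ) :
    f ∘ writeShift w x s = writeShift (f ∘ w) (f x) s := by
  funext z
  exact congrFun (Function.comp_update f w 0 x) (z + s)

namespace Tape

variable {X : Type}

def read (t : Tape X) : ℤ → Option X
  | .ofNat n => (t.head :: t.right).getD n none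
  | .negSucc n => t.left.getD n none

@[simp] lemma read_empty (z : ℤ) : (Tape.empty X).read z = none := by
  rcases z with (_ | n) | n <;> simp [read, Tape.empty]

lemma read_writeMove (t : Tape X) (e : Option X) (m : Move) :
    (t.writeMove e m).read = writeShift t.read e m.shift := by
  funext z
  rcases t with ⟨l, h, r⟩
  cases m
  · rcases l with _ | ⟨x, l⟩ <;> rcases z with (_ | _ | n) | (_ | n) <;> try rfl
    -- `Int.ofNat (n + 2) + -1` is not reduced by `rfl`
    all_goals
      simp only [writeShift]
      rw [show Int.ofNat (n + 2) + Move.L.shift = Int.ofNat (n + 1) by simp [Move.shift]; omega]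
      rfl
  · rcases r with _ | ⟨x, r⟩ <;> rcases z with (_ | n) | (_ | _ | n) <;> rfl

end Tape

namespace ParallelComposition

/-- A track cell: a symbol of a simulated tape, and whether that tape's head is here. -/
abbrev Track (D : Type) := Option D × Bool

abbrev Cell (D : Type) := Track D × Track D

variable {D : Type}

/-- A blank reads as two blank, unmarked tracks. -/
def view (tp : Tape (Cell D)) : ℤ → Cell D := (fun c => c.getD default) ∘ tp.read

lemma comp_view_writeMove {α : Type*} (p : Cell D → α) (tp : Tape (Cell D)) (x : Cell D)
    (m : Move) :
    p ∘ view (tp.writeMove (some x) m) = writeShift (p ∘ view tp) (p x) m.shift := by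
  rw [view, Tape.read_writeMove, comp_writeShift, comp_writeShift]
  rfl

structure Marked (w : ℤ → Track D) (π : ℤ) (t : Tape D) (d : Move) : Prop where
  sym : ∀ z, (w (z + π)).1 = t.read z
  mark : ∀ z, (w z).2 = true ↔ z = π
  pointsTo : d.PointsTo π

structure Unmarked (w : ℤ → Track D) (t : Tape D) : Prop where
  sym : ∀ z, (w z).1 = t.read z
  unmarked : ∀ z, (w z).2 = false

noncomputable def markerPos (w : ℤ → Track D) : ℤ := Classical.epsilon fun z => (w z).2 = true

section

variable {w : ℤ → Track D} {π : ℤ} {t : Tape D} {d : Move}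

lemma Marked.mark_zero (h : Marked w π t d) : (w 0).2 = true ↔ π = 0 :=
  (h.mark 0).trans eq_comm

lemma Marked.ne_zero (h : Marked w π t d) (hb : (w 0).2 = false) : π ≠ 0 :=
  fun h0 => Bool.false_ne_true (hb.symm.trans (h.mark_zero.2 h0))

lemma Marked.markerPos_eq (h : Marked w π t d) : markerPos w = π :=
  (h.mark _).1 (Classical.epsilon_spec (p := fun z => (w z).2 = true) ⟨π, (h.mark π).2 rfl⟩)

end

variable {p : Cell D → Track D} {tp : Tape (Cell D)} {x : Cell D} {t : Tape D} {π : ℤ}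
  {d : Move}

lemma Marked.head (h : Marked (p ∘ view tp) 0 t d) : (p (view tp 0)).1 = t.head := h.sym 0

lemma Unmarked.head (h : Unmarked (p ∘ view tp) t) : (p (view tp 0)).1 = t.head := h.sym 0

lemma Marked.keep (h : Marked (p ∘ view tp) π t d) (m : Move)
    (hx : p x = p (view tp 0) := by rfl) :
    Marked (p ∘ view (tp.writeMove (some x) m)) (π - m.shift) t
      (d.redirect (p (view tp 0)).2 m) := by
  rw [comp_view_writeMove, writeShift_of_eq hx]
  refine ⟨fun z => ?_, fun z => ?_, h.pointsTo.redirect h.mark_zero m⟩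
  · rw [add_assoc, sub_add_cancel]
    exact h.sym z
  · rw [h.mark]
    omega

lemma Marked.write (h : Marked (p ∘ view tp) 0 t d) {e : Option D} (m : Move)
    (hx : p x = (e, false) := by rfl) :
    Unmarked (p ∘ view (tp.writeMove (some x) m)) (t.writeMove e m) := by
  rw [comp_view_writeMove, hx]
  refine ⟨fun z => ?_, fun z => ?_⟩ <;>
    simp only [Tape.read_writeMove, writeShift, Function.update_apply]
  · split_ifs
    · rfl
    · simpa using h.sym (z + m.shift)
  · split_ifs with hz
    · rfl
    · exact Bool.eq_false_iff.2 fun hb => hz ((h.mark _).1 hb)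

lemma Unmarked.mark (h : Unmarked (p ∘ view tp) t) (m : Move)
    (hx : p x = ((p (view tp 0)).1, true) := by rfl) :
    Marked (p ∘ view (tp.writeMove (some x) m)) (-m.shift) t m.opp := by
  rw [comp_view_writeMove, hx]
  refine ⟨fun z => ?_, fun z => ?_, Move.pointsTo_opp m⟩ <;>
    simp only [writeShift, Function.update_apply, neg_add_cancel_right]
  · split_ifs with hz
    · subst hz
      exact h.sym 0
    · exact h.sym z
  · split_ifs with hz
    · simp only [true_iff]
      omega
    · simp only [h.unmarked, Bool.false_eq_true, false_iff]
      omega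

/-- `mark₁ p`: a step of `M₁` has been carried out and its new head cell is still to be marked;
`p` is the write and move of `M₂` still due after a communication. `pending₂ e m`: walking to the
second marker to write `e` there and move by `m`. `mark₂`: marking the new head cell of `M₂`. -/
inductive Phase (D : Type) : Type
  | boot
  | idle
  | mark₁ (pending : Option (Option D × Move))
  | pending₂ (e : Option D) (m : Move)
  | mark₂
deriving Fintype

structure Ctrl (Q₁ Q₂ D : Type) where
  q₁ : Q₁
  q₂ : Q₂
  head₂ : Option D
  dir₁ : Move
  dir₂ : Move
  phase : Phase D

instance {Q₁ Q₂ D : Type} [Fintype Q₁] [Fintype Q₂] [Fintype D] : Fintype (Ctrl Q₁ Q₂ D) :=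
  Fintype.ofEquiv (Q₁ × Q₂ × Option D × Move × Move × Phase D)
    { toFun := fun ⟨q₁, q₂, y, δ₁, δ₂, φ⟩ => ⟨q₁, q₂, y, δ₁, δ₂, φ⟩
      invFun := fun c => (c.q₁, c.q₂, c.head₂, c.dir₁, c.dir₂, c.phase)
      left_inv := fun _ => rfl
      right_inv := fun _ => rfl }

section Machine

variable {C D B : Type} (M₁ M₂ : RTM (CAct C (Option D) B) D) (C' : Set C)

inductive Step : Ctrl M₁.Q M₂.Q D → Cell D → Option (CAct C (Option D) B) → Cell D → Move →
    Ctrl M₁.Q M₂.Q D → Prop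
  | boot {q₁ q₂ y δ₁ δ₂ x} :
      Step ⟨q₁, q₂, y, δ₁, δ₂, .boot⟩ x none ((x.1.1, true), (x.2.1, true)) .L
        ⟨q₁, q₂, y, .R, .R, .idle⟩
  | walk {q₁ q₂ y δ₁ δ₂ x} (h : x.1.2 = false) :
      Step ⟨q₁, q₂, y, δ₁, δ₂, .idle⟩ x none x δ₁ ⟨q₁, q₂, y, δ₁, δ₂.redirect x.2.2 δ₁, .idle⟩
  | act₁ {q₁ q₂ y δ₁ δ₂ x a e m q₁'} (h : x.1.2 = true) (ht : M₁.trans q₁ x.1.1 a e m q₁')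
      (hc : ¬IsComm C' a) :
      Step ⟨q₁, q₂, y, δ₁, δ₂, .idle⟩ x a ((e, false), x.2) m
        ⟨q₁', q₂, y, δ₁, δ₂.redirect x.2.2 m, .mark₁ none⟩
  | act₂ {q₁ q₂ y δ₁ δ₂ x a e m q₂'} (h : x.1.2 = true) (ht : M₂.trans q₂ y a e m q₂')
      (hc : ¬IsComm C' a) :
      Step ⟨q₁, q₂, y, δ₁, δ₂, .idle⟩ x a x δ₂
        ⟨q₁, q₂', y, δ₂.opp, δ₂.redirect x.2.2 δ₂, .pending₂ e m⟩
  | comm {q₁ q₂ y δ₁ δ₂ x c v e m q₁' e' m' q₂'} (h : x.1.2 = true) (hc : c ∈ C')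
      (ht : M₁.trans q₁ x.1.1 (some (.send c v)) e m q₁' ∧
          M₂.trans q₂ y (some (.recv c v)) e' m' q₂' ∨
        M₁.trans q₁ x.1.1 (some (.recv c v)) e m q₁' ∧
          M₂.trans q₂ y (some (.send c v)) e' m' q₂') :
      Step ⟨q₁, q₂, y, δ₁, δ₂, .idle⟩ x none ((e, false), x.2) m
        ⟨q₁', q₂', y, δ₁, δ₂.redirect x.2.2 m, .mark₁ (some (e', m'))⟩
  | mark₁ {q₁ q₂ y δ₁ δ₂ x} :
      Step ⟨q₁, q₂, y, δ₁, δ₂, .mark₁ none⟩ x none ((x.1.1, true), x.2) δ₂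
        ⟨q₁, q₂, y, δ₂.opp, δ₂.redirect x.2.2 δ₂, .idle⟩
  | mark₁Pending {q₁ q₂ y δ₁ δ₂ x e m} :
      Step ⟨q₁, q₂, y, δ₁, δ₂, .mark₁ (some (e, m))⟩ x none ((x.1.1, true), x.2) δ₂
        ⟨q₁, q₂, y, δ₂.opp, δ₂.redirect x.2.2 δ₂, .pending₂ e m⟩
  | walk₂ {q₁ q₂ y δ₁ δ₂ x e m} (h : x.2.2 = false) :
      Step ⟨q₁, q₂, y, δ₁, δ₂, .pending₂ e m⟩ x none x δ₂
        ⟨q₁, q₂, y, δ₁.redirect x.1.2 δ₂, δ₂, .pending₂ e m⟩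
  | write₂ {q₁ q₂ y δ₁ δ₂ x e m} (h : x.2.2 = true) :
      Step ⟨q₁, q₂, y, δ₁, δ₂, .pending₂ e m⟩ x none (x.1, (e, false)) m
        ⟨q₁, q₂, y, δ₁.redirect x.1.2 m, δ₂, .mark₂⟩
  | mark₂ {q₁ q₂ y δ₁ δ₂ x} :
      Step ⟨q₁, q₂, y, δ₁, δ₂, .mark₂⟩ x none (x.1, (x.2.1, true)) δ₁
        ⟨q₁, q₂, x.2.1, δ₁.redirect x.1.2 δ₁, δ₁.opp, .idle⟩

def machine [Fintype D] : RTM (CAct C (Option D) B) (Cell D) where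
  Q := Ctrl M₁.Q M₂.Q D
  trans c y a y' m c' := ∃ x, y' = some x ∧ Step M₁ M₂ C' c (y.getD default) a x m c'
  init := ⟨M₁.init, M₂.init, none, .R, .R, .boot⟩
  final := {c | c.phase = .idle ∧ c.q₁ ∈ M₁.final ∧ c.q₂ ∈ M₂.final}

variable {M₁ M₂ C'} [Fintype D]

lemma machine_tr_iff {c : Ctrl M₁.Q M₂.Q D} {tp : Tape (Cell D)} {a}
    {u' : Ctrl M₁.Q M₂.Q D × Tape (Cell D)} :
    (machine M₁ M₂ C').lts.tr (c, tp) a u' ↔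
      ∃ x m c', Step M₁ M₂ C' c (view tp 0) a x m c' ∧ u' = (c', tp.writeMove (some x) m) := by
  constructor
  · rintro ⟨_, m, ⟨x, rfl, h⟩, h'⟩
    exact ⟨x, m, u'.1, h, Prod.ext rfl h'⟩
  · rintro ⟨x, m, c', h, rfl⟩
    exact ⟨some x, m, ⟨x, rfl, h⟩, rfl⟩

lemma Step.machine_tr {c c' : Ctrl M₁.Q M₂.Q D} {tp : Tape (Cell D)} {a x m}
    (h : Step M₁ M₂ C' c (view tp 0) a x m c') :
    (machine M₁ M₂ C').lts.tr (c, tp) a (c', tp.writeMove (some x) m) :=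
  machine_tr_iff.2 ⟨x, m, c', h, rfl⟩

end Machine

variable {Q₁ Q₂ D : Type}

inductive Rel : Ctrl Q₁ Q₂ D × Tape (Cell D) → (Q₁ × Tape D) × (Q₂ × Tape D) → Prop
  | boot {q₁ q₂ δ₁ δ₂ tp t₁ t₂} (h₁ : Unmarked (Prod.fst ∘ view tp) t₁)
      (h₂ : Unmarked (Prod.snd ∘ view tp) t₂) :
      Rel (⟨q₁, q₂, t₂.head, δ₁, δ₂, .boot⟩, tp) ((q₁, t₁), (q₂, t₂))
  | idle {q₁ q₂ y δ₁ δ₂ tp t₁ t₂ π₁ π₂} (hy : y = t₂.head)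
      (h₁ : Marked (Prod.fst ∘ view tp) π₁ t₁ δ₁) (h₂ : Marked (Prod.snd ∘ view tp) π₂ t₂ δ₂) :
      Rel (⟨q₁, q₂, y, δ₁, δ₂, .idle⟩, tp) ((q₁, t₁), (q₂, t₂))
  | mark₁ {q₁ q₂ δ₁ δ₂ tp t₁ t₂ π₂} (h₁ : Unmarked (Prod.fst ∘ view tp) t₁)
      (h₂ : Marked (Prod.snd ∘ view tp) π₂ t₂ δ₂) :
      Rel (⟨q₁, q₂, t₂.head, δ₁, δ₂, .mark₁ none⟩, tp) ((q₁, t₁), (q₂, t₂))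
  | mark₁Pending {q₁ q₂ y δ₁ δ₂ tp t₁ t₂ π₂ e m} (h₁ : Unmarked (Prod.fst ∘ view tp) t₁)
      (h₂ : Marked (Prod.snd ∘ view tp) π₂ t₂ δ₂) :
      Rel (⟨q₁, q₂, y, δ₁, δ₂, .mark₁ (some (e, m))⟩, tp) ((q₁, t₁), (q₂, t₂.writeMove e m))
  | pending₂ {q₁ q₂ y δ₁ δ₂ tp t₁ t₂ π₁ π₂ e m} (h₁ : Marked (Prod.fst ∘ view tp) π₁ t₁ δ₁)
      (h₂ : Marked (Prod.snd ∘ view tp) π₂ t₂ δ₂) :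
      Rel (⟨q₁, q₂, y, δ₁, δ₂, .pending₂ e m⟩, tp) ((q₁, t₁), (q₂, t₂.writeMove e m))
  | mark₂ {q₁ q₂ y δ₁ δ₂ tp t₁ t₂ π₁} (h₁ : Marked (Prod.fst ∘ view tp) π₁ t₁ δ₁)
      (h₂ : Unmarked (Prod.snd ∘ view tp) t₂) :
      Rel (⟨q₁, q₂, y, δ₁, δ₂, .mark₂⟩, tp) ((q₁, t₁), (q₂, t₂))

lemma Rel.q_eq {u : Ctrl Q₁ Q₂ D × Tape (Cell D)} {s} (hR : Rel u s) :
    u.1.q₁ = s.1.1 ∧ u.1.q₂ = s.2.1 := by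
  cases hR <;> exact ⟨rfl, rfl⟩

noncomputable def measure (u : Ctrl Q₁ Q₂ D × Tape (Cell D)) : ℕ ×ₗ ℕ :=
  match u.1.phase with
  | .idle => toLex (0, (markerPos (Prod.fst ∘ view u.2)).natAbs)
  | .mark₂ => toLex (1, 0)
  | .pending₂ _ _ => toLex (2, (markerPos (Prod.snd ∘ view u.2)).natAbs)
  | .mark₁ _ => toLex (3, 0)
  | .boot => toLex (4, 0)

def AtHead₁ (u : Ctrl Q₁ Q₂ D × Tape (Cell D)) : Prop :=
  u.1.phase = .idle ∧ (view u.2 0).1.2 = true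

section Simulation

variable {C D B : Type} {M₁ M₂ : RTM (CAct C (Option D) B) D} {C' : Set C}
  {c c' : Ctrl M₁.Q M₂.Q D} {tp : Tape (Cell D)} {s s' : (M₁.Q × Tape D) × (M₂.Q × Tape D)}
  {a : Option (CAct C (Option D) B)} {x : Cell D} {m : Move}

lemma Rel.stutter (hR : Rel (c, tp) s) (hc : ¬AtHead₁ (c, tp))
    (hM : Step M₁ M₂ C' c (view tp 0) a x m c') :
    a = none ∧ Rel (c', tp.writeMove (some x) m) s ∧
      measure (c', tp.writeMove (some x) m) < measure (c, tp) := by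
  cases hR with
  | boot h₁ h₂ =>
    cases hM
    exact ⟨rfl, .idle rfl (h₁.mark _) (h₂.mark _), by simp [measure, Prod.Lex.toLex_lt_toLex]⟩
  | idle hy h₁ h₂ =>
    cases hM with
    | walk hb =>
      have h₁' := hb ▸ h₁.keep m
      refine ⟨rfl, .idle hy h₁' (h₂.keep _), ?_⟩
      simpa [measure, h₁.markerPos_eq, h₁'.markerPos_eq, Prod.Lex.toLex_lt_toLex] using
        h₁.pointsTo.natAbs_sub_shift_lt (h₁.ne_zero hb)
    | act₁ hb | act₂ hb | comm hb => exact absurd ⟨rfl, hb⟩ hc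
  | mark₁ h₁ h₂ =>
    cases hM
    exact ⟨rfl, .idle rfl (h₁.mark _) (h₂.keep _), by simp [measure, Prod.Lex.toLex_lt_toLex]⟩
  | mark₁Pending h₁ h₂ =>
    cases hM
    exact ⟨rfl, .pending₂ (h₁.mark _) (h₂.keep _), by simp [measure, Prod.Lex.toLex_lt_toLex]⟩
  | pending₂ h₁ h₂ =>
    cases hM with
    | walk₂ hb =>
      have h₂' := hb ▸ h₂.keep m
      refine ⟨rfl, .pending₂ (h₁.keep _) h₂', ?_⟩
      simpa [measure, h₂.markerPos_eq, h₂'.markerPos_eq, Prod.Lex.toLex_lt_toLex] using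
        h₂.pointsTo.natAbs_sub_shift_lt (h₂.ne_zero hb)
    | write₂ hb =>
      obtain rfl := h₂.mark_zero.1 hb
      exact ⟨rfl, .mark₂ (h₁.keep _) (h₂.write _), by simp [measure, Prod.Lex.toLex_lt_toLex]⟩
  | mark₂ h₁ h₂ =>
    cases hM
    exact ⟨rfl, .idle h₂.head (h₁.keep _) (h₂.mark _),
      by simp [measure, Prod.Lex.toLex_lt_toLex]⟩

lemma Rel.exists_step (hR : Rel (c, tp) s) (hc : ¬AtHead₁ (c, tp)) :
    ∃ a x m c', Step M₁ M₂ C' c (view tp 0) a x m c' := by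
  cases hR with
  | boot => exact ⟨_, _, _, _, .boot⟩
  | idle => exact ⟨_, _, _, _, .walk (Bool.eq_false_iff.2 fun hb => hc ⟨rfl, hb⟩)⟩
  | mark₁ => exact ⟨_, _, _, _, .mark₁⟩
  | mark₁Pending => exact ⟨_, _, _, _, .mark₁Pending⟩
  | pending₂ =>
    cases hb : (view tp 0).2.2
    · exact ⟨_, _, _, _, .walk₂ hb⟩
    · exact ⟨_, _, _, _, .write₂ hb⟩
  | mark₂ => exact ⟨_, _, _, _, .mark₂⟩

lemma Rel.exists_par_tr (hR : Rel (c, tp) s) (hc : AtHead₁ (c, tp))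
    (hM : Step M₁ M₂ C' c (view tp 0) a x m c') :
    ∃ s', (parLTS C' M₁.lts M₂.lts).tr s a s' ∧ Rel (c', tp.writeMove (some x) m) s' := by
  obtain ⟨hφ, hb : (view tp 0).1.2 = true⟩ := hc
  cases hR with
  | idle hy h₁ h₂ =>
    subst hy
    obtain rfl := h₁.mark_zero.1 hb
    cases hM with
    | walk hb' => exact absurd (hb.symm.trans hb') (by decide)
    | act₁ _ ht hic =>
      rw [h₁.head] at ht
      refine ⟨((_, _), (_, _)), ⟨hic, .inl ⟨⟨_, _, ht, rfl⟩, rfl⟩⟩, ?_⟩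
      exact .mark₁ (h₁.write _) (h₂.keep _)
    | act₂ _ ht hic =>
      refine ⟨((_, _), (_, _)), ⟨hic, .inr (.inl ⟨⟨_, _, ht, rfl⟩, rfl⟩)⟩, ?_⟩
      exact .pending₂ (hb ▸ h₁.keep _) (h₂.keep _)
    | comm _ hch ht =>
      rw [h₁.head] at ht
      refine ⟨((_, _), (_, _)), ⟨id, .inr (.inr ⟨rfl, _, hch, _, ht.imp
        (fun ⟨h, h'⟩ => ⟨⟨_, _, h, rfl⟩, _, _, h', rfl⟩)
        (fun ⟨h, h'⟩ => ⟨⟨_, _, h, rfl⟩, _, _, h', rfl⟩)⟩)⟩, ?_⟩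
      exact .mark₁Pending (h₁.write _) (h₂.keep _)
  | _ => cases hφ

lemma Rel.exists_step_of_par_tr (hR : Rel (c, tp) s) (hc : AtHead₁ (c, tp))
    (h : (parLTS C' M₁.lts M₂.lts).tr s a s') :
    ∃ x m c', Step M₁ M₂ C' c (view tp 0) a x m c' ∧ Rel (c', tp.writeMove (some x) m) s' := by
  obtain ⟨hφ, hb : (view tp 0).1.2 = true⟩ := hc
  obtain ⟨⟨q₁', t₁'⟩, q₂', t₂'⟩ := s'
  cases hR with
  | idle hy h₁ h₂ =>
    subst hy
    obtain rfl := h₁.mark_zero.1 hb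
    obtain ⟨hic, ⟨⟨e, m, ht, rfl⟩, ⟨⟩⟩ | ⟨⟨e, m, ht, rfl⟩, ⟨⟩⟩ | ⟨rfl, ch, hch, v, hcomm⟩⟩ := h
    · rw [← h₁.head] at ht
      exact ⟨_, _, _, .act₁ hb ht hic, .mark₁ (h₁.write _) (h₂.keep _)⟩
    · exact ⟨_, _, _, .act₂ hb ht hic, .pending₂ (hb ▸ h₁.keep _) (h₂.keep _)⟩
    · rcases hcomm with ⟨⟨e, m, ht, rfl⟩, ⟨e', m', ht', rfl⟩⟩ |
        ⟨⟨e, m, ht, rfl⟩, ⟨e', m', ht', rfl⟩⟩ <;> rw [← h₁.head] at ht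
      · exact ⟨_, _, _, .comm hb hch (.inl ⟨ht, ht'⟩), .mark₁Pending (h₁.write _) (h₂.keep _)⟩
      · exact ⟨_, _, _, .comm hb hch (.inr ⟨ht, ht'⟩), .mark₁Pending (h₁.write _) (h₂.keep _)⟩
  | _ => cases hφ

variable [Fintype D] {u u' : Ctrl M₁.Q M₂.Q D × Tape (Cell D)}

lemma Rel.exists_tauReach_atHead₁ (hR : Rel u s) :
    ∃ w, (machine M₁ M₂ C').lts.tauReach u w ∧ Rel w s ∧ AtHead₁ w := by
  induction u using (wellFounded_lt.onFun (f := measure)).induction with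
  | _ u ih =>
  obtain ⟨c, tp⟩ := u
  by_cases hc : AtHead₁ (c, tp)
  · exact ⟨_, .refl, hR, hc⟩
  obtain ⟨a, x, m, c', hM⟩ := hR.exists_step (C' := C') hc
  obtain ⟨rfl, hR', hlt⟩ := hR.stutter hc hM
  obtain ⟨w, hw, hRw, hw₁⟩ := ih _ hlt hR'
  exact ⟨w, .head hM.machine_tr hw, hRw, hw₁⟩

lemma Rel.stutter_or_par_tr (hR : Rel u s) (h : (machine M₁ M₂ C').lts.tr u a u') :
    (a = none ∧ Rel u' s ∧ measure u' < measure u) ∨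
      ∃ s', (parLTS C' M₁.lts M₂.lts).tr s a s' ∧ Rel u' s' := by
  obtain ⟨c, tp⟩ := u
  obtain ⟨x, m, c', hM, rfl⟩ := machine_tr_iff.1 h
  by_cases hc : AtHead₁ (c, tp)
  · exact .inr (hR.exists_par_tr hc hM)
  · exact .inl (hR.stutter hc hM)

lemma Rel.simulate_par_tr (hR : Rel u s) (h : (parLTS C' M₁.lts M₂.lts).tr s a s') :
    ∃ w u', (machine M₁ M₂ C').lts.tauReach u w ∧ Rel w s ∧
      (machine M₁ M₂ C').lts.tr w a u' ∧ Rel u' s' := by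
  obtain ⟨⟨c, tp⟩, hw, hRw, hc⟩ := hR.exists_tauReach_atHead₁ (C' := C')
  obtain ⟨x, m, c', hM, hR'⟩ := hRw.exists_step_of_par_tr hc h
  exact ⟨_, _, hw, hRw, hM.machine_tr, hR'⟩

lemma Rel.mem_final (hR : Rel u s) (hu : u ∈ (machine M₁ M₂ C').lts.final) :
    s ∈ (parLTS C' M₁.lts M₂.lts).final := by
  obtain ⟨-, h₁, h₂⟩ := hu
  show s.1.1 ∈ M₁.final ∧ s.2.1 ∈ M₂.final
  exact ⟨hR.q_eq.1 ▸ h₁, hR.q_eq.2 ▸ h₂⟩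

lemma Rel.exists_tauReach_final (hR : Rel u s) (hs : s ∈ (parLTS C' M₁.lts M₂.lts).final) :
    ∃ w, (machine M₁ M₂ C').lts.tauReach u w ∧ Rel w s ∧ w ∈ (machine M₁ M₂ C').lts.final := by
  obtain ⟨w, hw, hRw, hφ, -⟩ := hR.exists_tauReach_atHead₁ (C' := C')
  exact ⟨w, hw, hRw, hφ, hRw.q_eq.1 ▸ hs.1, hRw.q_eq.2 ▸ hs.2⟩

lemma rel_init : Rel (machine M₁ M₂ C').lts.init (parLTS C' M₁.lts M₂.lts).init := by
  refine .boot (tp := Tape.empty _) (t₁ := Tape.empty D) (t₂ := Tape.empty D) ?_ ?_ <;>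
    exact ⟨fun _ => by simp [view]; rfl, fun _ => by simp [view]; rfl⟩

end Simulation

end ParallelComposition

theorem parallel_composition_of_RTMs_executable_general
    {C D B : Type} [Fintype D]
    (M₁ M₂ : RTM (CAct C (Option D) B) D) (C' : Set C) :
    ∃ (D' : Type) (_ : Fintype D') (M : RTM (CAct C (Option D) B) D'),
      DPBranchingBisimilar M.lts (parLTS C' M₁.lts M₂.lts) :=
  ⟨ParallelComposition.Cell D, inferInstance, ParallelComposition.machine M₁ M₂ C',
    dpBranchingBisimilar_of_simulation ParallelComposition.Rel ParallelComposition.measure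
      ParallelComposition.rel_init (fun _ _ _ _ => ParallelComposition.Rel.stutter_or_par_tr)
      (fun _ _ _ _ => ParallelComposition.Rel.simulate_par_tr)
      (fun _ _ => ParallelComposition.Rel.mem_final)
      (fun _ _ => ParallelComposition.Rel.exists_tauReach_final)⟩

/-- The parallel composition of two reactive Turing machines
(communicating on the channels in `C'`) can be simulated, up to
divergence-preserving branching bisimilarity, by a single reactive Turing
machine. -/
theorem parallel_composition_of_RTMs_executable
    {C D B : Type} [Fintype C] [Fintype D] [Fintype B]
    (M₁ M₂ : RTM (CAct C (Option D) B) D) (C' : Set C) :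
    ∃ (D' : Type) (_ : Fintype D') (M : RTM (CAct C (Option D) B) D'),
      DPBranchingBisimilar M.lts (parLTS C' M₁.lts M₂.lts) :=
  parallel_composition_of_RTMs_executable_general M₁ M₂ C'

end RTMPaper
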